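/- Adding a stably binding tile preserves stability: if α is a τ-stable assembly, p ∉ dom α is adjacent to dom α, and the tile t placed at p interacts with tiles of α with total glue strength at least τ, then the assembly β = α + (p ↦ t) is τ-stable. -/
import Mathlib


/-- A tile type over a glue-label type `G`: each of the four sides
(0 = North, 1 = East, 2 = South, 3 = West) carries a glue, i.e. a label
together with a nonnegative integer strength. -/
abbrev TileType (G : Type*) := Fin 4 → G × ℕ

/-- The unit vector pointing in each direction. -/
def dirVec : Fin 4 → ℤ × ℤ := ![(0, 1), (1, 0), (0, -1), (-1, 0)]

/-- The opposite of each direction. -/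
def oppDir : Fin 4 → Fin 4 := ![2, 3, 0, 1]

/-- An assembly over tile types with glues from `G` is a partial function
`ℤ² ⇀ TileType G`. -/
abbrev Assembly (G : Type*) := ℤ × ℤ → Option (TileType G)

/-- The domain of an assembly. -/
def Assembly.dom {G : Type*} (α : Assembly G) : Set (ℤ × ℤ) := {p | α p ≠ none}

variable {G : Type*} [DecidableEq G]

/-- The strength with which tile `t` binds to tile `u` across side `d` of `t`:
the common strength if the abutting glues match (equal label and strength)
with positive strength, and `0` otherwise. -/
def bond (t u : TileType G) (d : Fin 4) : ℕ :=
  if t d = u (oppDir d) ∧ 0 < (t d).2 then (t d).2 else 0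

/-- The bond strength in assembly `α` between position `p` and its neighbor in
direction `d` (zero if either position is empty). -/
def bondAt (α : Assembly G) (p : ℤ × ℤ) (d : Fin 4) : ℕ :=
  match α p, α (p + dirVec d) with
  | some t, some u => bond t u d
  | _, _ => 0

/-- The cut of the binding graph of `α` determined by `A ⊆ dom α` has weight at
least `τ`: some finite set of crossing edges has total bond strength `≥ τ`. -/
def CutWeightGE (α : Assembly G) (A : Set (ℤ × ℤ)) (τ : ℕ) : Prop :=
  ∃ S : Finset ((ℤ × ℤ) × Fin 4),
    (∀ e ∈ S, e.1 ∈ A ∧ e.1 + dirVec e.2 ∉ A) ∧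
    τ ≤ ∑ e ∈ S, bondAt α e.1 e.2

/-- `α` is `τ`-stable: every cut of its binding graph has weight at least `τ`. -/
def Stable (α : Assembly G) (τ : ℕ) : Prop :=
  ∀ A : Set (ℤ × ℤ), A ⊆ α.dom → A.Nonempty → (α.dom \ A).Nonempty →
    CutWeightGE α A τ

/-- The total strength with which a tile `t` placed at empty position `p`
binds to the assembly `α`. -/
def bindStrength (α : Assembly G) (p : ℤ × ℤ) (t : TileType G) : ℕ :=
  ∑ d : Fin 4, match α (p + dirVec d) with
    | some u => bond t u d
    | none => 0

lemma dirVec_ne_zero (d : Fin 4) : dirVec d ≠ 0 := by fin_cases d <;> decide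

lemma dirVec_inj : Function.Injective dirVec := by decide

lemma add_dirVec_ne (p : ℤ × ℤ) (d : Fin 4) : p + dirVec d ≠ p := by
  intro h
  exact dirVec_ne_zero d (by simpa using h)

lemma dirVec_oppDir (d : Fin 4) : dirVec (oppDir d) = -dirVec d := by
  fin_cases d <;> decide

lemma oppDir_oppDir (d : Fin 4) : oppDir (oppDir d) = d := by
  fin_cases d <;> decide

lemma bond_symm {G : Type*} [DecidableEq G] (t u : TileType G) (d : Fin 4) :
    bond u t (oppDir d) = bond t u d := by
  unfold bond
  rw [oppDir_oppDir]
  by_cases hc : t d = u (oppDir d)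
  · rw [hc]
  · rw [if_neg (fun h => hc h.1.symm), if_neg (fun h => hc h.1)]



/-- Adding a stably binding tile preserves stability: if `α` is `τ`-stable,
`p ∉ dom α` is adjacent to `dom α`, and the tile `t` placed at `p` binds to `α`
with total strength at least `τ`, then `α + (p ↦ t)` is `τ`-stable. -/
theorem attach_preserves_stable {G : Type*} [DecidableEq G]
    (α : Assembly G) (τ : ℕ) (p : ℤ × ℤ) (t : TileType G)
    (hstable : Stable α τ)
    (hp : p ∉ α.dom)
    (hadj : ∃ d : Fin 4, p + dirVec d ∈ α.dom)
    (hbind : τ ≤ bindStrength α p t) :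
    Stable (Function.update α p (some t)) τ := by
  intro A hA hAne hcne
  set β := Function.update α p (some t) with hβ
  have hαp : α p = none := by
    by_contra h; exact hp h
  have hβp : β p = some t := Function.update_self _ _ _
  have hβq : ∀ q : ℤ × ℤ, q ≠ p → β q = α q := fun q hq => Function.update_of_ne hq _ _
  have hdom : Assembly.dom β = α.dom ∪ {p} := by
    ext q
    by_cases hq : q = p
    · subst hq; simp [Assembly.dom, hβp]
    · simp [Assembly.dom, hβq q hq, hq]
  rw [hdom] at hA hcne
  by_cases hpA : p ∈ A
  · by_cases hsing : A ⊆ {p}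
    · -- A = {p} : use the edges from p
      refine ⟨Finset.univ.image (fun d => ((p : ℤ × ℤ), d)), ?_, ?_⟩
      · rintro ⟨q, d⟩ he
        simp only [Finset.mem_image, Finset.mem_univ, true_and] at he
        obtain ⟨d', hd'⟩ := he
        obtain ⟨rfl, rfl⟩ := Prod.mk.injEq .. ▸ hd'
        exact ⟨hpA, fun h => add_dirVec_ne _ _ (hsing h)⟩
      · rw [Finset.sum_image (by intro a _ b _ h; exact (Prod.mk.injEq .. ▸ h).2)]
        refine le_trans hbind (le_of_eq ?_)
        refine Finset.sum_congr rfl fun d _ => ?_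
        unfold bondAt
        rw [hβp, hβq _ (add_dirVec_ne p d)]
        cases α (p + dirVec d) <;> rfl
    · -- A properly contains p : cut A \ {p} in α
      have hA' : A \ {p} ⊆ α.dom := by
        rintro q ⟨hq, hq2⟩
        rcases hA hq with h | h
        · exact h
        · exact absurd h hq2
      have hne' : (A \ {p}).Nonempty := by
        obtain ⟨q, hq, hq2⟩ := Set.not_subset.mp hsing
        exact ⟨q, hq, hq2⟩
      have hcne' : (α.dom \ (A \ {p})).Nonempty := by
        obtain ⟨q, hq1, hq2⟩ := hcne
        have hqp : q ≠ p := fun h => hq2 (h ▸ hpA)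
        rcases hq1 with h | h
        · exact ⟨q, h, fun h2 => hq2 h2.1⟩
        · exact absurd h hqp
      obtain ⟨S, hS1, hS2⟩ := hstable (A \ {p}) hA' hne' hcne'
      refine ⟨S.filter (fun e => e.1 + dirVec e.2 ≠ p), ?_, ?_⟩
      · rintro e he
        rw [Finset.mem_filter] at he
        obtain ⟨heS, hep⟩ := he
        obtain ⟨he1, he2⟩ := hS1 e heS
        refine ⟨he1.1, fun h => he2 ⟨h, hep⟩⟩
      · calc τ ≤ ∑ e ∈ S, bondAt α e.1 e.2 := hS2
          _ = ∑ e ∈ S.filter (fun e => e.1 + dirVec e.2 ≠ p), bondAt α e.1 e.2 := by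
              refine (Finset.sum_filter_of_ne ?_).symm
              intro e heS hne h
              apply hne
              unfold bondAt
              rw [h, hαp]
              cases α e.1 <;> rfl
          _ = ∑ e ∈ S.filter (fun e => e.1 + dirVec e.2 ≠ p), bondAt β e.1 e.2 := by
              refine Finset.sum_congr rfl fun e he => ?_
              rw [Finset.mem_filter] at he
              have h1 : e.1 ≠ p := fun h => hp (h ▸ hA' (hS1 e he.1).1)
              unfold bondAt
              rw [hβq _ h1, hβq _ he.2]
  · -- p ∉ A
    have hAα : A ⊆ α.dom := fun q hq => ((hA hq).resolve_right (fun h => hpA (h ▸ hq)))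
    by_cases hcα : (α.dom \ A).Nonempty
    · obtain ⟨S, hS1, hS2⟩ := hstable A hAα hAne hcα
      refine ⟨S, hS1, le_trans hS2 (Finset.sum_le_sum fun e heS => ?_)⟩
      have h1 : e.1 ≠ p := fun h => hp (h ▸ hAα (hS1 e heS).1)
      by_cases h2 : e.1 + dirVec e.2 = p
      · unfold bondAt
        rw [h2, hαp]
        cases α e.1 <;> simp
      · unfold bondAt
        rw [hβq _ h1, hβq _ h2]
    · -- A = α.dom, cut separates α from p
      have hAeq : A = α.dom := Set.Subset.antisymm hAα
        (fun q hq => by_contra fun h => hcα ⟨q, hq, h⟩)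
      refine ⟨(Finset.univ.filter (fun d => (α (p + dirVec d)).isSome)).image
        (fun d => (p + dirVec d, oppDir d)), ?_, ?_⟩
      · rintro ⟨q, d⟩ he
        simp only [Finset.mem_image, Finset.mem_filter, Finset.mem_univ, true_and] at he
        obtain ⟨d', hd', heq⟩ := he
        obtain ⟨h1, h2⟩ := Prod.mk.injEq .. ▸ heq
        subst h1; subst h2
        constructor
        · rw [hAeq]
          exact Option.isSome_iff_ne_none.mp hd'
        · have : p + dirVec d' + dirVec (oppDir d') = p := by
            rw [dirVec_oppDir]; abel
          rw [this]; exact hpA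
      · rw [Finset.sum_image ?inj]
        case inj =>
          intro a _ b _ h
          exact dirVec_inj (by have := (Prod.mk.injEq .. ▸ h).1; simpa using this)
        refine le_trans hbind (le_of_eq ?_)
        unfold bindStrength
        rw [← Finset.sum_filter_of_ne (p := fun d => (α (p + dirVec d)).isSome)]
        · refine Finset.sum_congr rfl fun d hd => ?_
          rw [Finset.mem_filter] at hd
          obtain ⟨u, hu⟩ := Option.isSome_iff_exists.mp hd.2
          have hstep : p + dirVec d + dirVec (oppDir d) = p := by
            rw [dirVec_oppDir]; abel
          unfold bondAt
          rw [hstep, hβp, hβq _ (add_dirVec_ne p d), hu]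
          exact (bond_symm t u d).symm
        · intro d _ hne
          by_contra hns
          rw [Option.not_isSome_iff_eq_none] at hns
          exact hne (by rw [hns])
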